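/- arXiv:1909.06579 — 7 statements merged into one kernel-verified Lean document; each statement's English description precedes it below -/
import Mathlib

section
/- Let R₁ < R₂ be real numbers, let ω : ℝ → ℝ be continuously differentiable and strictly positive on [R₁, R₂], and let λ : ℝ → ℝ be continuous and nonnegative on [R₁, R₂]. Suppose a₁, a : ℝ → ℝ are twice continuously differentiable and nonnegative on [R₁, R₂], satisfy a₁(R₁) = a(R₁) = 0, a₁(R₂) > 0, a(R₂) > 0, and solve a₁''(r) + (ω'(r)/ω(r))·a₁'(r) = 0 and a''(r) + (ω'(r)/ω(r))·a'(r) − λ(r)·a(r) = 0 for all r ∈ [R₁, R₂]. Then a₁'(R₂)/a₁(R₂) ≤ a'(R₂)/a(R₂). -/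
open Set

/-- **Radial ODE comparison for mixed Steklov-Dirichlet eigenfunctions.**
Let `R₁ < R₂`, let `ω` be continuously differentiable and strictly positive on `[R₁, R₂]`,
and let `lam` be continuous and nonnegative on `[R₁, R₂]`. If `a₁, a` are twice continuously
differentiable, nonnegative on `[R₁, R₂]`, vanish at `R₁`, are positive at `R₂`, and satisfy
`a₁'' + (ω'/ω)·a₁' = 0` and `a'' + (ω'/ω)·a' − lam·a = 0` on `[R₁, R₂]`, then
`a₁'(R₂)/a₁(R₂) ≤ a'(R₂)/a(R₂)`. -/
theorem stmt0 (R₁ R₂ : ℝ) (hR : R₁ < R₂)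
    (ω ω' lam a₁ a₁' a₁'' a a' a'' : ℝ → ℝ)
    (hωderiv : ∀ r ∈ Icc R₁ R₂, HasDerivAt ω (ω' r) r)
    (hω'cont : ContinuousOn ω' (Icc R₁ R₂))
    (hωpos : ∀ r ∈ Icc R₁ R₂, 0 < ω r)
    (hlamcont : ContinuousOn lam (Icc R₁ R₂))
    (hlamnonneg : ∀ r ∈ Icc R₁ R₂, 0 ≤ lam r)
    (ha₁deriv : ∀ r ∈ Icc R₁ R₂, HasDerivAt a₁ (a₁' r) r)
    (ha₁deriv2 : ∀ r ∈ Icc R₁ R₂, HasDerivAt a₁' (a₁'' r) r)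
    (ha₁''cont : ContinuousOn a₁'' (Icc R₁ R₂))
    (haderiv : ∀ r ∈ Icc R₁ R₂, HasDerivAt a (a' r) r)
    (haderiv2 : ∀ r ∈ Icc R₁ R₂, HasDerivAt a' (a'' r) r)
    (ha''cont : ContinuousOn a'' (Icc R₁ R₂))
    (ha₁nonneg : ∀ r ∈ Icc R₁ R₂, 0 ≤ a₁ r)
    (hanonneg : ∀ r ∈ Icc R₁ R₂, 0 ≤ a r)
    (ha₁R₁ : a₁ R₁ = 0) (haR₁ : a R₁ = 0)
    (ha₁R₂ : 0 < a₁ R₂) (haR₂ : 0 < a R₂)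
    (hode₁ : ∀ r ∈ Icc R₁ R₂, a₁'' r + (ω' r / ω r) * a₁' r = 0)
    (hode : ∀ r ∈ Icc R₁ R₂, a'' r + (ω' r / ω r) * a' r - lam r * a r = 0) :
    a₁' R₂ / a₁ R₂ ≤ a' R₂ / a R₂ := by

  set W : ℝ → ℝ := fun r => ω r * (a₁' r * a r - a' r * a₁ r) with hW
  have hWcont : ContinuousOn W (Icc R₁ R₂) := by
    apply ContinuousOn.mul
    · exact fun x hx => (hωderiv x hx).continuousAt.continuousWithinAt
    · apply ContinuousOn.sub
      · exact ContinuousOn.mul (fun x hx => (ha₁deriv2 x hx).continuousAt.continuousWithinAt)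
          (fun x hx => (haderiv x hx).continuousAt.continuousWithinAt)
      · exact ContinuousOn.mul (fun x hx => (haderiv2 x hx).continuousAt.continuousWithinAt)
          (fun x hx => (ha₁deriv x hx).continuousAt.continuousWithinAt)
  have hanti : AntitoneOn W (Icc R₁ R₂) := by
    apply antitoneOn_of_deriv_nonpos (convex_Icc R₁ R₂) hWcont
    · intro x hx
      have hx' : x ∈ Icc R₁ R₂ := interior_subset hx
      have hWd : HasDerivAt W
          (ω' x * (a₁' x * a x - a' x * a₁ x) +
            ω x * (a₁'' x * a x + a₁' x * a' x - (a'' x * a₁ x + a' x * a₁' x))) x :=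
        (hωderiv x hx').mul (((ha₁deriv2 x hx').mul (haderiv x hx')).sub
          ((haderiv2 x hx').mul (ha₁deriv x hx')))
      exact hWd.differentiableAt.differentiableWithinAt
    · intro x hx
      have hx' : x ∈ Icc R₁ R₂ := interior_subset hx
      have h1 : HasDerivAt (fun r => a₁' r * a r - a' r * a₁ r)
          (a₁'' x * a x + a₁' x * a' x - (a'' x * a₁ x + a' x * a₁' x)) x :=
        ((ha₁deriv2 x hx').mul (haderiv x hx')).sub ((haderiv2 x hx').mul (ha₁deriv x hx'))
      have hWd : HasDerivAt W
          (ω' x * (a₁' x * a x - a' x * a₁ x) +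
            ω x * (a₁'' x * a x + a₁' x * a' x - (a'' x * a₁ x + a' x * a₁' x))) x :=
        (hωderiv x hx').mul h1
      rw [hWd.deriv]
      have hωne : ω x ≠ 0 := (hωpos x hx').ne'
      have e1 := hode₁ x hx'
      have e2 := hode x hx'
      have e1' : ω x * a₁'' x + ω' x * a₁' x = 0 := by
        field_simp at e1; linarith
      have e2' : ω x * a'' x + ω' x * a' x = ω x * (lam x * a x) := by
        field_simp at e2; nlinarith [e2]
      have hnn : 0 ≤ ω x * (lam x * a x) * a₁ x :=
        mul_nonneg (mul_nonneg (hωpos x hx').le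
          (mul_nonneg (hlamnonneg x hx') (hanonneg x hx'))) (ha₁nonneg x hx')
      have m1 : (ω x * a₁'' x + ω' x * a₁' x) * a x = 0 := by rw [e1']; ring
      have m2 : (ω x * a'' x + ω' x * a' x) * a₁ x = ω x * (lam x * a x) * a₁ x := by
        rw [e2']
      nlinarith [m1, m2, hnn]
  have hkey : W R₂ ≤ W R₁ := hanti (left_mem_Icc.2 hR.le) (right_mem_Icc.2 hR.le) hR.le
  have hWR₁ : W R₁ = 0 := by simp [hW, ha₁R₁, haR₁]
  have hωR₂ : 0 < ω R₂ := hωpos R₂ (right_mem_Icc.2 hR.le)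
  rw [div_le_div_iff₀ ha₁R₂ haR₂]
  have h0 : W R₂ ≤ 0 := hWR₁ ▸ hkey
  have : ω R₂ * (a₁' R₂ * a R₂ - a' R₂ * a₁ R₂) ≤ 0 := h0
  nlinarith [this, hωR₂]
end

section
/- Let p, q, r, L be real numbers with 0 < p < π/2, 0 < q < π/2, 0 < r < π/2, p ≤ q, q < π/4, and 0 ≤ L ≤ π. If cos(2p) ≤ cos(2q)·cos(2r) + sin(2q)·sin(2r)·cos L, then L < π/2. -/
open Real

/-- **Acute angle for CROSSs of curvature between 1 and 4.**
If `0 < p, q, r < π/2`, `p ≤ q < π/4`, `0 ≤ L ≤ π` and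
`cos 2p ≤ cos 2q · cos 2r + sin 2q · sin 2r · cos L`, then `L < π/2`. -/
theorem stmt3 (p q r L : ℝ) (hp0 : 0 < p) (hpπ : p < π / 2) (hq0 : 0 < q) (hqπ : q < π / 2)
    (hr0 : 0 < r) (hrπ : r < π / 2) (hpq : p ≤ q) (hq : q < π / 4)
    (hL0 : 0 ≤ L) (hLπ : L ≤ π)
    (hcos : Real.cos (2 * p) ≤
      Real.cos (2 * q) * Real.cos (2 * r) + Real.sin (2 * q) * Real.sin (2 * r) * Real.cos L) :
    L < π / 2 := by
  have hpi := Real.pi_pos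
  have h2q : 0 < Real.cos (2 * q) := by
    apply Real.cos_pos_of_mem_Ioo
    constructor <;> nlinarith
  have h2p : Real.cos (2 * q) ≤ Real.cos (2 * p) :=
    Real.cos_le_cos_of_nonneg_of_le_pi (by linarith) (by nlinarith) (by linarith)
  have hsq : 0 < Real.sin (2 * q) := Real.sin_pos_of_pos_of_lt_pi (by linarith) (by nlinarith)
  have hsr : 0 < Real.sin (2 * r) := Real.sin_pos_of_pos_of_lt_pi (by linarith) (by nlinarith)
  have hcr1 : Real.cos (2 * r) < 1 := by
    have := Real.cos_lt_cos_of_nonneg_of_le_pi (x := 0) (y := 2 * r) (le_refl 0) (by linarith) (by positivity)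
    simpa using this
  have hkey : Real.cos (2 * q) * Real.cos (2 * r) < Real.cos (2 * p) := by
    rcases le_or_gt (Real.cos (2 * r)) 0 with h | h
    · nlinarith
    · nlinarith
  by_contra h
  push_neg at h
  have : Real.cos L ≤ 0 :=
    Real.cos_nonpos_of_pi_div_two_le_of_le h (by linarith)
  nlinarith [mul_nonpos_of_nonneg_of_nonpos (mul_nonneg hsq.le hsr.le) this]
end

section
/- Let m ≥ 2, let σ be the canonical surface measure on the unit sphere S = {P ∈ EuclideanSpace ℝ m : ‖P‖ = 1}, let R₁ > 0, define a : (0,∞) → ℝ by a(r) = ∫_{R₁}^{r} t^{1−m} dt, and define F(X) = ∫_{P ∈ S} a(‖P − X‖)² dσ(P) for X in the open unit ball. Then for every X with ‖X‖ + R₁ < 1 one has F(0) ≤ F(X), and equality holds if and only if X = 0. -/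
/-!
Write `g P = a ‖P - X‖`. Integrating the kernel `a ‖·‖` (the fundamental solution of the
Laplacian) against the uniform measure on the unit sphere gives a potential that is constant inside
the ball, as in Newton's shell theorem, so `∫ g = ∫ g|_{X = 0} = |S| a 1`. Hence
`F X = F 0 + ∫ (g - a 1)²`, and the last integral is positive when `X ≠ 0` because `g > a 1` at
`P = -X / ‖X‖`, `a` being strictly increasing.

The potential is rotation invariant, hence of the form `φ ‖X‖`. Since the kernel is harmonic away
from the origin in dimension `n`, `φ'' + (n - 1) φ' / r = 0` on `(0, 1)`, so `r ^ (n - 1) φ'` is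
constant. It vanishes at `r = 0`, so `φ' = 0`.
-/

open MeasureTheory Metric Set Filter Topology
open scoped RealInnerProductSpace Pointwise

theorem eq_of_hasDerivAt_eq_zero {f : ℝ → ℝ} {a b : ℝ} (hab : a ≤ b)
    (hf : ContinuousOn f (Icc a b)) (hf' : ∀ x ∈ Ioo a b, HasDerivAt f 0 x) : f b = f a := by
  rcases hab.eq_or_lt with rfl | hlt
  · rfl
  obtain ⟨c, -, hc⟩ := exists_hasDerivAt_eq_slope f (fun _ => 0) hlt hf hf'
  rw [eq_comm, div_eq_zero_iff, sub_eq_zero] at hc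
  exact hc.resolve_right (sub_ne_zero.2 hlt.ne')

/-- Solutions of `ψ' = -k ψ / t` are `C t⁻ᵏ`, so continuity at `0` forces `C = 0`. -/
theorem eq_zero_of_hasDerivAt_eq_neg_mul_div {ψ : ℝ → ℝ} {k : ℕ} (hk : k ≠ 0) {T : ℝ}
    (h0 : ContinuousAt ψ 0) (hψ : ∀ t ∈ Ioo 0 T, HasDerivAt ψ (-(k * ψ t / t)) t) {t : ℝ}
    (ht : t ∈ Ioo 0 T) : ψ t = 0 := by
  have hw : ∀ r ∈ Ioo 0 t, HasDerivAt (fun r => r ^ k * ψ r) 0 r := fun r hr => by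
    refine ((hasDerivAt_pow k r).mul (hψ r ⟨hr.1, hr.2.trans ht.2⟩)).congr_deriv ?_
    obtain ⟨j, rfl⟩ := Nat.exists_eq_succ_of_ne_zero hk
    field_simp [hr.1.ne']
    push_cast [pow_succ]
    ring
  have hcont : ContinuousOn (fun r => r ^ k * ψ r) (Icc 0 t) := fun r hr => by
    refine ((continuous_pow k).continuousAt.mul ?_).continuousWithinAt
    rcases hr.1.eq_or_lt with rfl | hr0
    exacts [h0, (hψ r ⟨hr0, hr.2.trans_lt ht.2⟩).continuousAt]
  have := eq_of_hasDerivAt_eq_zero ht.1.le hcont hw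
  simpa [zero_pow hk, ht.1.ne'] using this

theorem hasDerivAt_integral_zpow {c r : ℝ} (hc : 0 < c) (hr : 0 < r) (k : ℤ) :
    HasDerivAt (fun x => ∫ t in c..x, t ^ k) (r ^ k) r := by
  have hcont : ContinuousOn (fun t : ℝ => t ^ k) (Ioi 0) := fun t ht =>
    (continuousAt_zpow₀ t k (Or.inl (ne_of_gt ht))).continuousWithinAt
  refine intervalIntegral.integral_hasDerivAt_right ?_
    (hcont.stronglyMeasurableAtFilter isOpen_Ioi r hr)
    (continuousAt_zpow₀ r k (Or.inl hr.ne'))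
  refine (hcont.mono fun t ht => ?_).intervalIntegrable
  exact (lt_min hc hr).trans_le ht.1

theorem strictMonoOn_of_hasDerivAt_zpow {a : ℝ → ℝ} {k : ℤ}
    (ha : ∀ r, 0 < r → HasDerivAt a (r ^ k) r) : StrictMonoOn a (Ioi 0) :=
  strictMonoOn_of_deriv_pos (convex_Ioi 0)
    (continuousOn_of_forall_continuousAt fun r hr => (ha r hr).continuousAt)
    (fun r hr => by rw [interior_Ioi] at hr; rw [(ha r hr).deriv]; exact zpow_pos hr k)

theorem hasDerivAt_sqrt_sq_add_sq {t : ℝ} (ht : t ≠ 0) (s : ℝ) :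
    HasDerivAt (fun s => √(t ^ 2 + s ^ 2)) (s / √(t ^ 2 + s ^ 2)) s := by
  refine (((hasDerivAt_pow 2 s).const_add (t ^ 2)).sqrt (by positivity)).congr_deriv ?_
  field_simp
  push_cast
  ring

theorem integral_sq_eq_add_integral_sub_sq {α : Type*} [MeasurableSpace α] {μ : Measure α}
    [IsFiniteMeasure μ] {g : α → ℝ} (hg : Integrable g μ) (hg2 : Integrable (fun x => g x ^ 2) μ)
    {c : ℝ} (hc : ∫ x, g x ∂μ = μ.real univ * c) :
    ∫ x, g x ^ 2 ∂μ = μ.real univ * c ^ 2 + ∫ x, (g x - c) ^ 2 ∂μ := by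
  have hexp : ∀ x, (g x - c) ^ 2 = g x ^ 2 - 2 * c * g x + c ^ 2 := fun x => by ring
  simp_rw [hexp]
  have hlin : Integrable (fun x => g x ^ 2 - 2 * c * g x) μ := hg2.sub (hg.const_mul _)
  rw [integral_add hlin (integrable_const _), integral_sub hg2 (hg.const_mul _),
    MeasureTheory.integral_const_mul, integral_const, hc, smul_eq_mul]
  ring

theorem ContinuousOn.comp_norm {E : Type*} [NormedAddCommGroup E] {a : ℝ → ℝ}
    (ha : ContinuousOn a (Ioi 0)) : ContinuousOn (fun x : E => a ‖x‖) {0}ᶜ :=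
  ha.comp continuous_norm.continuousOn fun _ hx => norm_pos_iff.2 hx

section Kernel

variable {E : Type*} [NormedAddCommGroup E] [InnerProductSpace ℝ E]

noncomputable def gradKernel (n : ℕ) (v x : E) : ℝ := ⟪x, v⟫ * ‖x‖ ^ (-(n : ℤ))

noncomputable def hessKernel (n : ℕ) (v x : E) : ℝ :=
  ‖v‖ ^ 2 * ‖x‖ ^ (-(n : ℤ)) - n * ⟪x, v⟫ ^ 2 * ‖x‖ ^ (-(n : ℤ) - 2)

theorem hasDerivAt_norm_add_smul {x : E} (hx : x ≠ 0) (v : E) :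
    HasDerivAt (fun s : ℝ => ‖x + s • v‖) (⟪x, v⟫ / ‖x‖) 0 := by
  have hline : HasDerivAt (fun s : ℝ => x + s • v) v 0 := by
    simpa using ((hasDerivAt_id (0 : ℝ)).smul_const v).const_add x
  have hsq := hline.norm_sq.sqrt (by simpa using hx)
  simp only [zero_smul, add_zero, Real.sqrt_sq (norm_nonneg _)] at hsq
  convert hsq using 1
  field_simp

theorem hasDerivAt_inner_add_smul (x v : E) :
    HasDerivAt (fun s : ℝ => ⟪x + s • v, v⟫) (‖v‖ ^ 2) 0 := by
  have : (fun s : ℝ => ⟪x + s • v, v⟫) = fun s => ⟪x, v⟫ + s * ‖v‖ ^ 2 := by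
    ext s; rw [inner_add_left, real_inner_smul_left, real_inner_self_eq_norm_sq]
  rw [this]
  simpa using ((hasDerivAt_id (0 : ℝ)).mul_const (‖v‖ ^ 2)).const_add ⟪x, v⟫

theorem hasDerivAt_comp_norm_add_smul {n : ℕ} {a : ℝ → ℝ}
    (ha : ∀ r, 0 < r → HasDerivAt a (r ^ (1 - (n : ℤ))) r) {x : E} (hx : x ≠ 0) (v : E) :
    HasDerivAt (fun s : ℝ => a ‖x + s • v‖) (gradKernel n v x) 0 := by
  have hr : 0 < ‖x‖ := norm_pos_iff.2 hx
  have h := (ha ‖x‖ hr).comp_of_eq (0 : ℝ) (hasDerivAt_norm_add_smul hx v) (by simp)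
  refine h.congr_deriv ?_
  rw [gradKernel, sub_eq_neg_add, zpow_add₀ hr.ne', zpow_one]
  field_simp

theorem hasDerivAt_gradKernel_add_smul (n : ℕ) {x : E} (hx : x ≠ 0) (v : E) :
    HasDerivAt (fun s : ℝ => gradKernel n v (x + s • v)) (hessKernel n v x) 0 := by
  have hr : 0 < ‖x‖ := norm_pos_iff.2 hx
  have hpow := (hasDerivAt_zpow (-(n : ℤ)) ‖x‖ (Or.inl hr.ne')).comp_of_eq (0 : ℝ)
    (hasDerivAt_norm_add_smul hx v) (by simp)
  have h := (hasDerivAt_inner_add_smul x v).mul hpow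
  simp only [Function.comp_apply, zero_smul, add_zero] at h
  refine h.congr_deriv ?_
  rw [hessKernel, show -(n : ℤ) - 1 = (-(n : ℤ) - 2) + 1 by ring, zpow_add₀ hr.ne', zpow_one,
    show -(n : ℤ) = (-(n : ℤ) - 2) + 2 by ring, zpow_add₀ hr.ne']
  push_cast
  field_simp
  ring

theorem norm_smul_add_smul_of_inner_eq_zero {u w : E} (hu : ‖u‖ = 1) (hw : ‖w‖ = 1)
    (huw : ⟪u, w⟫ = 0) (t s : ℝ) : ‖t • u + s • w‖ = √(t ^ 2 + s ^ 2) := by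
  rw [← Real.sqrt_sq (norm_nonneg _), norm_add_sq_real, norm_smul, norm_smul, hu, hw,
    real_inner_smul_left, real_inner_smul_right, huw]
  simp

theorem continuousOn_gradKernel (n : ℕ) (v : E) : ContinuousOn (gradKernel n v) {0}ᶜ :=
  (continuous_id.inner continuous_const).continuousOn.mul
    (continuousOn_id.norm.zpow₀ _ fun _ hx => Or.inl (norm_ne_zero_iff.2 hx))

theorem continuousOn_hessKernel (n : ℕ) (v : E) : ContinuousOn (hessKernel n v) {0}ᶜ := by
  have hpow : ∀ k : ℤ, ContinuousOn (fun x : E => ‖x‖ ^ k) {0}ᶜ := fun k =>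
    continuousOn_id.norm.zpow₀ _ fun _ hx => Or.inl (norm_ne_zero_iff.2 hx)
  exact (continuousOn_const.mul (hpow _)).sub
    ((continuousOn_const.mul ((continuous_id.inner continuous_const).continuousOn.pow 2)).mul
      (hpow _))

theorem OrthonormalBasis.sum_hessKernel {ι : Type*} [Fintype ι] (b : OrthonormalBasis ι ℝ E)
    {x : E} (hx : x ≠ 0) : ∑ i, hessKernel (Fintype.card ι) (b i) x = 0 := by
  have hr : 0 < ‖x‖ := norm_pos_iff.2 hx
  have hsq : ∑ i, ⟪x, b i⟫ ^ 2 = ‖x‖ ^ 2 := by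
    simpa [sq, real_inner_comm, real_inner_self_eq_norm_sq] using b.sum_inner_mul_inner x x
  simp only [hessKernel, b.orthonormal.1, Finset.sum_sub_distrib, ← Finset.sum_mul,
    ← Finset.mul_sum, hsq]
  rw [show -(Fintype.card ι : ℤ) = (-(Fintype.card ι : ℤ) - 2) + 2 by ring, zpow_add₀ hr.ne']
  simp
  ring

end Kernel

theorem exists_mem_sphere_one_lt_norm_sub {E : Type*} [NormedAddCommGroup E] [NormedSpace ℝ E]
    {X : E} (hX : X ≠ 0) : ∃ P ∈ sphere (0 : E) 1, 1 < ‖P - X‖ := by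
  have hX' : 0 < ‖X‖ := norm_pos_iff.2 hX
  refine ⟨-‖X‖⁻¹ • X, by simp [norm_smul, hX'.ne'], ?_⟩
  have hPX : -‖X‖⁻¹ • X - X = -((‖X‖⁻¹ + 1) • X) := by module
  rw [hPX, norm_neg, norm_smul, Real.norm_of_nonneg (by positivity), add_mul,
    inv_mul_cancel₀ hX'.ne']
  linarith

section SpherePotential

variable {E : Type*} [NormedAddCommGroup E]

theorem sub_coe_sphere_ne_zero {Y : E} (hY : ‖Y‖ < 1) (P : sphere (0 : E) 1) : Y - P ≠ 0 := by
  rw [sub_ne_zero]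
  rintro rfl
  simp at hY

theorem sub_coe_sphere_mem_closedBall_diff_ball {Z : E} {δ : ℝ} (hδ : 0 ≤ δ) (hZ : ‖Z‖ ≤ 1 - δ)
    (P : sphere (0 : E) 1) : Z - P ∈ closedBall (0 : E) 2 \ ball 0 δ := by
  have hP : ‖(P : E)‖ = 1 := mem_sphere_zero_iff_norm.1 P.2
  have h₁ := norm_sub_le Z P
  have h₂ := norm_sub_norm_le (P : E) Z
  rw [norm_sub_rev (P : E)] at h₂
  refine ⟨mem_closedBall_zero_iff.2 (by linarith), fun h => ?_⟩
  rw [mem_ball_zero_iff] at h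
  linarith

theorem continuous_comp_sub_sphere {k : E → ℝ} (hk : ContinuousOn k {0}ᶜ) {Y : E} (hY : ‖Y‖ < 1) :
    Continuous fun P : sphere (0 : E) 1 => k (Y - P) :=
  hk.comp_continuous (by fun_prop) (sub_coe_sphere_ne_zero hY)

theorem continuous_comp_norm_sub_sphere {a : ℝ → ℝ} (ha : ContinuousOn a (Ioi 0)) {X : E}
    (hX : ‖X‖ < 1) : Continuous fun P : sphere (0 : E) 1 => a ‖(P : E) - X‖ := by
  simpa only [norm_sub_rev] using continuous_comp_sub_sphere ha.comp_norm hX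

variable [NormedSpace ℝ E] [MeasurableSpace E]

noncomputable def spherePotential (σ : Measure (sphere (0 : E) 1)) (k : E → ℝ) (Y : E) : ℝ :=
  ∫ P, k (Y - P) ∂σ

variable [FiniteDimensional ℝ E] [BorelSpace E] (σ : Measure (sphere (0 : E) 1)) [IsFiniteMeasure σ]

theorem integrable_comp_sub_sphere {k : E → ℝ} (hk : ContinuousOn k {0}ᶜ) {Y : E} (hY : ‖Y‖ < 1) :
    Integrable (fun P : sphere (0 : E) 1 => k (Y - P)) σ :=
  (continuous_comp_sub_sphere hk hY).integrable_of_hasCompactSupport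
    (HasCompactSupport.of_compactSpace _)

theorem hasDerivAt_spherePotential {k k' : E → ℝ} (hk : ContinuousOn k {0}ᶜ)
    (hk' : ContinuousOn k' {0}ᶜ) {v : E}
    (hderiv : ∀ x ≠ 0, HasDerivAt (fun s : ℝ => k (x + s • v)) (k' x) 0) {Y : E} {s₀ : ℝ}
    (hY : ‖Y + s₀ • v‖ < 1) :
    HasDerivAt (fun s => spherePotential σ k (Y + s • v))
      (spherePotential σ k' (Y + s₀ • v)) s₀ := by
  set δ := (1 - ‖Y + s₀ • v‖) / 2
  have hδ : 0 < δ := by simp only [δ]; linarith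
  set N : Set ℝ := {s | ‖Y + s • v‖ < 1 - δ}
  have hN : N ∈ 𝓝 s₀ := (isOpen_lt (by fun_prop) continuous_const).mem_nhds
    (show ‖Y + s₀ • v‖ < 1 - δ by simp only [δ]; linarith)
  have hY' : ∀ s ∈ N, ‖Y + s • v‖ < 1 := fun s hs => lt_of_lt_of_le hs (by linarith)
  -- the uniform bound on `k'` comes from a compact annulus avoiding the origin
  set K : Set E := closedBall 0 2 \ ball 0 δ
  have hK0 : K ⊆ {0}ᶜ := fun x hx h0 => hx.2 (by rw [mem_singleton_iff.1 h0]; simpa using hδ)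
  have hann : ∀ s ∈ N, ∀ P : sphere (0 : E) 1, Y + s • v - P ∈ K := fun s hs =>
    sub_coe_sphere_mem_closedBall_diff_ball hδ.le (le_of_lt hs)
  obtain ⟨C, hC⟩ := ((isCompact_closedBall _ _).diff isOpen_ball).exists_bound_of_continuousOn
    (hk'.mono hK0)
  refine (hasDerivAt_integral_of_dominated_loc_of_deriv_le (bound := fun _ => C) hN ?_
    (integrable_comp_sub_sphere σ hk hY) (continuous_comp_sub_sphere hk' hY).aestronglyMeasurable
    (ae_of_all _ fun P s hs => hC _ (hann s hs P)) (integrable_const C)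
    (ae_of_all _ fun P s hs => ?_)).2
  · filter_upwards [hN] with s hs
    exact (continuous_comp_sub_sphere hk (hY' s hs)).aestronglyMeasurable
  · have h := HasDerivAt.comp_sub_const s s (by rw [sub_self]; exact hderiv _ (hK0 (hann s hs P)))
    exact h.congr_of_eventuallyEq (Eventually.of_forall fun r => congrArg k (by module))

end SpherePotential

section Rotation

variable {E : Type*} [NormedAddCommGroup E] [InnerProductSpace ℝ E] [MeasurableSpace E]
  [BorelSpace E]

namespace LinearIsometryEquiv

def sphereEquiv (e : E ≃ₗᵢ[ℝ] E) : sphere (0 : E) 1 ≃ᵐ sphere (0 : E) 1 :=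
  (e.toHomeomorph.subtype fun x => by simp).toMeasurableEquiv

@[simp]
theorem coe_sphereEquiv_apply (e : E ≃ₗᵢ[ℝ] E) (P : sphere (0 : E) 1) :
    (e.sphereEquiv P : E) = e P :=
  rfl

theorem measurePreserving_sphereEquiv_toSphere (e : E ≃ₗᵢ[ℝ] E) {μ : Measure E}
    (he : MeasurePreserving e μ μ) : MeasurePreserving e.sphereEquiv μ.toSphere μ.toSphere := by
  refine ⟨e.sphereEquiv.measurable, Measure.ext fun s hs => ?_⟩
  rw [Measure.map_apply e.sphereEquiv.measurable hs, Measure.toSphere_apply' _ hs,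
    Measure.toSphere_apply' _ (e.sphereEquiv.measurable hs)]
  have hcone : Ioo (0 : ℝ) 1 • ((↑) '' (e.sphereEquiv ⁻¹' s) : Set E) =
      e.toMeasurableEquiv ⁻¹' (Ioo (0 : ℝ) 1 • ((↑) '' s)) := by
    ext x
    simp only [Set.mem_smul, mem_image, mem_preimage, coe_toMeasurableEquiv]
    constructor
    · rintro ⟨c, hc, _, ⟨P, hP, rfl⟩, rfl⟩
      exact ⟨c, hc, _, ⟨_, hP, rfl⟩, by simp⟩
    · rintro ⟨c, hc, _, ⟨Q, hQ, rfl⟩, hx⟩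
      refine ⟨c, hc, _, ⟨e.sphereEquiv.symm Q, by simpa using hQ, rfl⟩, ?_⟩
      apply e.injective
      rw [map_smul, ← coe_sphereEquiv_apply, MeasurableEquiv.apply_symm_apply, hx]
  rw [hcone, (show MeasurePreserving e.toMeasurableEquiv μ μ from he).measure_preimage_equiv]

end LinearIsometryEquiv

theorem spherePotential_comp_norm_eq_of_norm_eq {σ : Measure (sphere (0 : E) 1)}
    (hσ : ∀ e : E ≃ₗᵢ[ℝ] E, MeasurePreserving e.sphereEquiv σ σ) (f : ℝ → ℝ) {Y Z : E}
    (h : ‖Y‖ = ‖Z‖) :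
    spherePotential σ (fun x => f ‖x‖) Y = spherePotential σ (fun x => f ‖x‖) Z := by
  set e := (ℝ ∙ (Y - Z))ᗮ.reflection
  have heY : e Y = Z := Submodule.reflection_sub h
  unfold spherePotential
  rw [← (hσ e).integral_comp' fun P : sphere (0 : E) 1 => f ‖Z - P‖]
  congr with P
  rw [LinearIsometryEquiv.coe_sphereEquiv_apply, ← heY, ← map_sub, LinearIsometryEquiv.norm_map]

end Rotation

section Constancy

variable {E : Type*} [NormedAddCommGroup E] [InnerProductSpace ℝ E] [FiniteDimensional ℝ E]
  [MeasurableSpace E] [BorelSpace E] {σ : Measure (sphere (0 : E) 1)} [IsFiniteMeasure σ]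
  {n : ℕ} {a : ℝ → ℝ}

theorem hasDerivAt_spherePotential_comp_norm
    (ha : ∀ r, 0 < r → HasDerivAt a (r ^ (1 - (n : ℤ))) r) {v Y : E} {s₀ : ℝ}
    (h : ‖Y + s₀ • v‖ < 1) :
    HasDerivAt (fun s => spherePotential σ (fun x => a ‖x‖) (Y + s • v))
      (spherePotential σ (gradKernel n v) (Y + s₀ • v)) s₀ :=
  hasDerivAt_spherePotential σ
    (continuousOn_of_forall_continuousAt fun r hr => (ha r hr).continuousAt).comp_norm
    (continuousOn_gradKernel n v)
    (fun _ hx => hasDerivAt_comp_norm_add_smul ha hx v) h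

theorem hasDerivAt_spherePotential_gradKernel (n : ℕ) {v Y : E} {s₀ : ℝ}
    (h : ‖Y + s₀ • v‖ < 1) :
    HasDerivAt (fun s => spherePotential σ (gradKernel n v) (Y + s • v))
      (spherePotential σ (hessKernel n v) (Y + s₀ • v)) s₀ :=
  hasDerivAt_spherePotential σ (continuousOn_gradKernel n v) (continuousOn_hessKernel n v)
    (fun _ hx => hasDerivAt_gradKernel_add_smul n hx v) h

theorem hasDerivAt_spherePotential_comp_norm_smul
    (ha : ∀ r, 0 < r → HasDerivAt a (r ^ (1 - (n : ℤ))) r) {u : E} {r : ℝ} (h : ‖r • u‖ < 1) :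
    HasDerivAt (fun r => spherePotential σ (fun x => a ‖x‖) (r • u))
      (spherePotential σ (gradKernel n u) (r • u)) r := by
  simpa using hasDerivAt_spherePotential_comp_norm (σ := σ) ha (Y := 0) (by simpa using h)

theorem hasDerivAt_spherePotential_gradKernel_smul (n : ℕ) {u : E} {r : ℝ} (h : ‖r • u‖ < 1) :
    HasDerivAt (fun r => spherePotential σ (gradKernel n u) (r • u))
      (spherePotential σ (hessKernel n u) (r • u)) r := by
  simpa using hasDerivAt_spherePotential_gradKernel (σ := σ) n (Y := 0) (by simpa using h)

theorem integral_sq_comp_norm_sub_sub_pos [σ.IsOpenPosMeasure] (ha : ContinuousOn a (Ioi 0))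
    (ha' : StrictMonoOn a (Ioi 0)) {X : E} (hX : ‖X‖ < 1) (hX₀ : X ≠ 0) :
    0 < ∫ P, (a ‖(P : E) - X‖ - a 1) ^ 2 ∂σ := by
  obtain ⟨P, hP, hP₁⟩ := exists_mem_sphere_one_lt_norm_sub hX₀
  have hlt := ha' (mem_Ioi.2 one_pos) (mem_Ioi.2 (one_pos.trans hP₁)) hP₁
  have hcont : Continuous fun Q : sphere (0 : E) 1 => (a ‖(Q : E) - X‖ - a 1) ^ 2 :=
    ((continuous_comp_norm_sub_sphere ha hX).sub continuous_const).pow 2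
  exact integral_pos_of_integrable_nonneg_nonzero (x := ⟨P, hP⟩) hcont
    (hcont.integrable_of_hasCompactSupport (.of_compactSpace _)) (fun _ => sq_nonneg _)
    (pow_ne_zero 2 (sub_ne_zero.2 hlt.ne'))

variable (hσ : ∀ e : E ≃ₗᵢ[ℝ] E, MeasurePreserving e.sphereEquiv σ σ)
  (ha : ∀ r, 0 < r → HasDerivAt a (r ^ (1 - (n : ℤ))) r)
include hσ ha

/-- In a direction `w` orthogonal to `u`, the potential near `t • u` is `φ (√(t² + s²))` with
`φ r` its value at `r • u`; differentiating twice at `s = 0` leaves only `φ' t / t`. -/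
theorem spherePotential_hessKernel_of_inner_eq_zero {u w : E} (hu : ‖u‖ = 1) (hw : ‖w‖ = 1)
    (huw : ⟪u, w⟫ = 0) {t : ℝ} (ht₀ : 0 < t) (ht₁ : t < 1) :
    spherePotential σ (hessKernel n w) (t • u) =
      spherePotential σ (gradKernel n u) (t • u) / t := by
  set φ : ℝ → ℝ := fun r => spherePotential σ (fun x => a ‖x‖) (r • u)
  set ψ : ℝ → ℝ := fun r => spherePotential σ (gradKernel n u) (r • u)
  set ρ : ℝ → ℝ := fun s => √(t ^ 2 + s ^ 2)
  have hρ : ∀ s, ‖t • u + s • w‖ = ρ s := norm_smul_add_smul_of_inner_eq_zero hu hw huw t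
  have hρ₀ : ρ 0 = t := by simp [ρ, ht₀.le]
  have hρpos : ∀ s, 0 < ρ s := fun s => Real.sqrt_pos.2 (by positivity)
  have hρ' : ∀ s, HasDerivAt ρ (s / ρ s) s := hasDerivAt_sqrt_sq_add_sq ht₀.ne'
  have hφ : ∀ r, |r| < 1 → HasDerivAt φ (ψ r) r := fun r hr =>
    hasDerivAt_spherePotential_comp_norm_smul ha (by rwa [norm_smul, hu, mul_one])
  have hψ : HasDerivAt ψ (spherePotential σ (hessKernel n u) (t • u)) t :=
    hasDerivAt_spherePotential_gradKernel_smul n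
      (by rwa [norm_smul, hu, mul_one, Real.norm_of_nonneg ht₀.le])
  have hradial : (fun s => spherePotential σ (fun x => a ‖x‖) (t • u + s • w)) = φ ∘ ρ := by
    ext s
    exact spherePotential_comp_norm_eq_of_norm_eq hσ a (by
      rw [hρ, norm_smul, hu, mul_one, Real.norm_of_nonneg (hρpos s).le])
  have hU : {s : ℝ | ρ s < 1} ∈ 𝓝 0 :=
    (continuous_id.const_add _ |>.comp (continuous_pow 2) |>.sqrt).isOpen_preimage _ isOpen_Iio
      |>.mem_nhds (show ρ 0 < 1 by rwa [hρ₀])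
  have hfirst : (fun s => spherePotential σ (gradKernel n w) (t • u + s • w)) =ᶠ[𝓝 0]
      fun s => ψ (ρ s) * (s / ρ s) := by
    filter_upwards [hU] with s hs
    have h₁ := hasDerivAt_spherePotential_comp_norm (σ := σ) ha (Y := t • u) (v := w) (s₀ := s)
      (by rwa [hρ])
    rw [hradial] at h₁
    exact h₁.unique ((hφ (ρ s) (by rwa [abs_of_pos (hρpos s)])).comp s (hρ' s))
  have h₂ := hasDerivAt_spherePotential_gradKernel (σ := σ) n (Y := t • u) (v := w) (s₀ := 0)
    (by rw [hρ, hρ₀]; exact ht₁)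
  have h₂' : HasDerivAt (fun s => ψ (ρ s) * (s / ρ s)) (ψ t / t) 0 := by
    have hquot := (hasDerivAt_id (0 : ℝ)).div (hρ' 0) (hρpos 0).ne'
    have hcomp := hψ.comp_of_eq (0 : ℝ) (hρ' 0) hρ₀.symm
    refine (hcomp.mul hquot).congr_deriv ?_
    simp [hρ₀]
    field_simp
  simpa using h₂.congr_of_eventuallyEq hfirst.symm |>.unique h₂'

theorem hasDerivAt_spherePotential_gradKernel_eq_neg_mul_div {ι : Type*} [Fintype ι]
    (b : OrthonormalBasis ι ℝ E) (hn : Fintype.card ι = n) (i₀ : ι) {t : ℝ} (ht₀ : 0 < t)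
    (ht₁ : t < 1) :
    HasDerivAt (fun r => spherePotential σ (gradKernel n (b i₀)) (r • b i₀))
      (-(((n - 1 : ℕ) : ℝ) * spherePotential σ (gradKernel n (b i₀)) (t • b i₀) / t)) t := by
  classical
  set u := b i₀
  have hu : ‖u‖ = 1 := b.orthonormal.1 i₀
  have htu : ‖t • u‖ < 1 := by rwa [norm_smul, hu, mul_one, Real.norm_of_nonneg ht₀.le]
  refine (hasDerivAt_spherePotential_gradKernel_smul n htu).congr_deriv ?_
  have hsum : ∑ i, spherePotential σ (hessKernel n (b i)) (t • u) = 0 := by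
    unfold spherePotential
    rw [← integral_finsetSum _ fun i _ =>
      integrable_comp_sub_sphere σ (continuousOn_hessKernel n (b i)) htu]
    exact integral_eq_zero_of_ae (ae_of_all _ fun P =>
      hn ▸ b.sum_hessKernel (sub_coe_sphere_ne_zero htu P))
  rw [← Finset.add_sum_erase _ _ (Finset.mem_univ i₀), Finset.sum_congr rfl fun i hi =>
    spherePotential_hessKernel_of_inner_eq_zero hσ ha hu (b.orthonormal.1 i)
      (b.orthonormal.2 (Finset.ne_of_mem_erase hi).symm) ht₀ ht₁, Finset.sum_const,
    Finset.card_erase_of_mem (Finset.mem_univ i₀), Finset.card_univ, hn, nsmul_eq_mul] at hsum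
  linear_combination hsum

theorem spherePotential_comp_norm_eq_of_norm_lt_one (hn : Module.finrank ℝ E = n) (h2 : 2 ≤ n)
    {Y : E} (hY : ‖Y‖ < 1) :
    spherePotential σ (fun x => a ‖x‖) Y = spherePotential σ (fun x => a ‖x‖) 0 := by
  set b := stdOrthonormalBasis ℝ E
  set i₀ : Fin (Module.finrank ℝ E) := ⟨0, by omega⟩
  set u := b i₀
  have hu : ‖u‖ = 1 := b.orthonormal.1 i₀
  have hsmall : ∀ r : ℝ, |r| < 1 → ‖r • u‖ < 1 := fun r hr => by rwa [norm_smul, hu, mul_one]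
  set φ := fun r : ℝ => spherePotential σ (fun x => a ‖x‖) (r • u)
  set ψ := fun r : ℝ => spherePotential σ (gradKernel n u) (r • u)
  have hφ : ∀ r, |r| < 1 → HasDerivAt φ (ψ r) r := fun r hr =>
    hasDerivAt_spherePotential_comp_norm_smul ha (hsmall r hr)
  have hψ : ∀ t ∈ Ioo (0 : ℝ) 1, ψ t = 0 := fun t ht =>
    eq_zero_of_hasDerivAt_eq_neg_mul_div (k := n - 1) (by omega)
      (hasDerivAt_spherePotential_gradKernel_smul n (hsmall 0 (by simp))).continuousAt
      (fun s hs => hasDerivAt_spherePotential_gradKernel_eq_neg_mul_div hσ ha b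
        (by simp [hn]) i₀ hs.1 hs.2) ht
  have habs : ∀ r ∈ Icc (0 : ℝ) ‖Y‖, |r| < 1 := fun r hr => by
    rw [abs_of_nonneg hr.1]; exact hr.2.trans_lt hY
  calc spherePotential σ (fun x => a ‖x‖) Y = φ ‖Y‖ :=
        spherePotential_comp_norm_eq_of_norm_eq hσ a (by simp [norm_smul, hu])
    _ = φ 0 := eq_of_hasDerivAt_eq_zero (norm_nonneg Y)
        (fun r hr => (hφ r (habs r hr)).continuousAt.continuousWithinAt)
        (fun r hr => hψ r ⟨hr.1, hr.2.trans hY⟩ ▸ hφ r (habs r (Ioo_subset_Icc_self hr)))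
    _ = spherePotential σ (fun x => a ‖x‖) 0 := by simp [φ]

theorem integral_sq_comp_norm_sub_eq (hn : Module.finrank ℝ E = n) (h2 : 2 ≤ n) {X : E}
    (hX : ‖X‖ < 1) :
    ∫ P, a ‖(P : E) - X‖ ^ 2 ∂σ =
      σ.real univ * a 1 ^ 2 + ∫ P, (a ‖(P : E) - X‖ - a 1) ^ 2 ∂σ := by
  have hg := continuous_comp_norm_sub_sphere
    (continuousOn_of_forall_continuousAt fun r hr => (ha r hr).continuousAt) hX
  refine integral_sq_eq_add_integral_sub_sq
    (hg.integrable_of_hasCompactSupport (.of_compactSpace _))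
    ((hg.pow 2).integrable_of_hasCompactSupport (.of_compactSpace _)) ?_
  have h := spherePotential_comp_norm_eq_of_norm_lt_one hσ ha hn h2 hX
  simp only [spherePotential, zero_sub, norm_neg, norm_sub_rev X] at h
  simp [h, mem_sphere_zero_iff_norm.1 (Subtype.prop _)]

end Constancy

/-- **The boundary L² term is minimized at the center.**
For `m ≥ 2`, `R₁ > 0`, `a(r) = ∫_{R₁}^{r} t^{1−m} dt`, and
`F(X) = ∫_{P ∈ S^{m−1}} a(‖P − X‖)² dσ(P)`, one has `F(0) ≤ F(X)` for every `X` with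
`‖X‖ + R₁ < 1`, with equality iff `X = 0`. -/
theorem stmt6 (m : ℕ) (hm : 2 ≤ m) (R₁ : ℝ) (hR₁ : 0 < R₁)
    (a : ℝ → ℝ) (ha : ∀ r : ℝ, a r = ∫ t in R₁..r, t ^ (1 - (m : ℤ)))
    (F : EuclideanSpace ℝ (Fin m) → ℝ)
    (hF : ∀ X : EuclideanSpace ℝ (Fin m),
      F X = ∫ P : sphere (0 : EuclideanSpace ℝ (Fin m)) 1,
          (a ‖(P : EuclideanSpace ℝ (Fin m)) - X‖) ^ 2
        ∂((volume : Measure (EuclideanSpace ℝ (Fin m))).toSphere))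
    (X : EuclideanSpace ℝ (Fin m)) (hX : ‖X‖ + R₁ < 1) :
    F 0 ≤ F X ∧ (F 0 = F X ↔ X = 0) := by
  set σ := (volume : Measure (EuclideanSpace ℝ (Fin m))).toSphere
  have ha' : ∀ r, 0 < r → HasDerivAt a (r ^ (1 - (m : ℤ))) r := fun r hr => by
    rw [show a = fun r => ∫ t in R₁..r, t ^ (1 - (m : ℤ)) from funext ha]
    exact hasDerivAt_integral_zpow hR₁ hr _
  have hX₁ : ‖X‖ < 1 := by linarith
  have hF0 : F 0 = σ.real univ * a 1 ^ 2 := by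
    simp [hF, σ, mem_sphere_zero_iff_norm.1 (Subtype.prop _)]
  have hFX : F X = F 0 + ∫ P, (a ‖(P : EuclideanSpace ℝ (Fin m)) - X‖ - a 1) ^ 2 ∂σ := by
    rw [hF, hF0]
    exact integral_sq_comp_norm_sub_eq
      (fun e => e.measurePreserving_sphereEquiv_toSphere e.measurePreserving) ha'
      finrank_euclideanSpace_fin hm hX₁
  refine ⟨?_, fun heq => by_contra fun hX₀ => ?_, fun h => by rw [h]⟩
  · exact hFX ▸ le_add_of_nonneg_right (integral_nonneg fun _ => sq_nonneg _)
  · linarith [integral_sq_comp_norm_sub_sub_pos (σ := σ)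
      (continuousOn_of_forall_continuousAt fun r hr => (ha' r hr).continuousAt)
      (strictMonoOn_of_hasDerivAt_zpow ha') hX₁ hX₀]
end

section
/- Let m ≥ 2, let 0 < R₁ < R₂, and let C, C' ∈ EuclideanSpace ℝ m be such that the closed ball of radius R₁ centered at C is contained in the open ball of radius R₂ centered at C'. Then, with respect to the Lebesgue measure, ∫_{x ∈ ball(C',R₂) \ closedBall(C,R₁)} ‖x − C‖^{2(1−m)} dx ≤ ∫_{x ∈ ball(C,R₂) \ closedBall(C,R₁)} ‖x − C‖^{2(1−m)} dx, and equality holds if and only if C' = C. -/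
/-!
Write `B = ball C R₂`, `B' = ball C' R₂` and `K = closedBall C R₁ ⊆ B ∩ B'`. The two domains
`B \ K` and `B' \ K` share `(B ∩ B') \ K` and have equal measure, so the comparison is between
`B \ B'` and `B' \ B`, which have equal measure too. The integrand is a strictly decreasing function
of `‖x - C‖`, which is `< R₂` on `B \ B'` and `≥ R₂` on `B' \ B`; when `C' ≠ C` the set `B \ B'`
contains a nonempty open set, so the inequality is strict.
-/

open MeasureTheory Metric Set

section EqualMeasureComparison

variable {X : Type*} [MeasurableSpace X] {μ : Measure X} {s t : Set X} {f : X → ℝ} {c : ℝ}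

theorem measureReal_mul_lt_setIntegral (hs : MeasurableSet s) (hμs : μ s ≠ ⊤)
    (hpos : 0 < μ s) (hf : IntegrableOn f s μ) (hlt : ∀ x ∈ s, c < f x) :
    μ.real s * c < ∫ x in s, f x ∂μ := by
  have hconst : IntegrableOn (fun _ => c) s μ := integrableOn_const hμs
  have hgap : 0 < ∫ x in s, (f x - c) ∂μ := by
    have hnonneg : 0 ≤ᵐ[μ.restrict s] fun x => f x - c := by
      filter_upwards [ae_restrict_mem hs] with x hx
      exact sub_nonneg.2 (hlt x hx).le
    rw [setIntegral_pos_iff_support_of_nonneg_ae hnonneg (hf.sub hconst)]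
    refine hpos.trans_le (measure_mono fun x hx => ⟨?_, hx⟩)
    exact sub_ne_zero.2 (hlt x hx).ne'
  rw [integral_sub hf hconst, setIntegral_const, smul_eq_mul] at hgap
  linarith

theorem setIntegral_le_measureReal_mul (hs : MeasurableSet s) (hμs : μ s ≠ ⊤)
    (hf : IntegrableOn f s μ) (hle : ∀ x ∈ s, f x ≤ c) :
    ∫ x in s, f x ∂μ ≤ μ.real s * c := by
  rw [← smul_eq_mul, ← setIntegral_const]
  exact setIntegral_mono_on hf (integrableOn_const hμs) hs hle

theorem setIntegral_lt_of_measure_eq (hs : MeasurableSet s) (ht : MeasurableSet t)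
    (hμ : μ s = μ t) (hμs : μ s ≠ ⊤) (hfs : IntegrableOn f s μ) (hft : IntegrableOn f t μ)
    (hle : ∀ x ∈ t \ s, f x ≤ c) (hlt : ∀ x ∈ s \ t, c < f x) (hpos : 0 < μ (s \ t)) :
    ∫ x in t, f x ∂μ < ∫ x in s, f x ∂μ := by
  have hμsdiff : μ (s \ t) = μ (t \ s) :=
    measure_sdiff_symm hs.nullMeasurableSet ht.nullMeasurableSet hμ
      (measure_ne_top_of_subset inter_subset_left hμs)
  have hfin : μ (s \ t) ≠ ⊤ := measure_ne_top_of_subset sdiff_subset hμs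
  rw [← integral_inter_add_sdiff hs hft, ← integral_inter_add_sdiff ht hfs, inter_comm]
  gcongr
  calc ∫ x in t \ s, f x ∂μ
      ≤ μ.real (t \ s) * c :=
        setIntegral_le_measureReal_mul (ht.diff hs) (hμsdiff ▸ hfin) (hft.mono_set sdiff_subset) hle
    _ = μ.real (s \ t) * c := by rw [measureReal_def, measureReal_def, hμsdiff]
    _ < ∫ x in s \ t, f x ∂μ :=
        measureReal_mul_lt_setIntegral (hs.diff ht) hfin hpos (hfs.mono_set sdiff_subset) hlt

end EqualMeasureComparison

section Balls

variable {E : Type*} [NormedAddCommGroup E] [NormedSpace ℝ E]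

theorem nonempty_ball_sdiff_closedBall_of_ne {C C' : E} (hne : C' ≠ C) {r : ℝ} (hr : 0 < r) :
    (ball C r \ closedBall C' r).Nonempty := by
  set d := ‖C - C'‖
  have hd : 0 < d := norm_pos_iff.2 (sub_ne_zero.2 hne.symm)
  obtain ⟨t, ht, htr, htd⟩ : ∃ t, 0 < t ∧ t < r ∧ r < t + d :=
    ⟨r - min d r / 2, by linarith [min_le_right d r, lt_min hd hr], by linarith [lt_min hd hr],
      by linarith [min_le_left d r]⟩
  -- the point at distance `t` from `C` on the ray from `C'` through `C`
  refine ⟨C + (t / d) • (C - C'), ?_, ?_⟩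
  · rw [mem_ball, dist_eq_norm, add_sub_cancel_left, norm_smul, Real.norm_of_nonneg (by positivity),
      div_mul_cancel₀ _ hd.ne']
    exact htr
  · rw [mem_closedBall, dist_eq_norm, not_le]
    have : C + (t / d) • (C - C') - C' = (1 + t / d) • (C - C') := by rw [add_smul, one_smul]; abel
    rw [this, norm_smul, Real.norm_of_nonneg (by positivity), add_mul, one_mul,
      div_mul_cancel₀ _ hd.ne']
    linarith

variable [MeasurableSpace E] [BorelSpace E] [FiniteDimensional ℝ E] (μ : Measure E)
  [μ.IsAddHaarMeasure] {g : ℝ → ℝ} {R₁ R₂ : ℝ} {C C' : E}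

theorem integrableOn_ball_sdiff_closedBall_of_antitoneOn (hgm : Measurable g)
    (hg : AntitoneOn g (Ici R₁)) (y : E) (r : ℝ) :
    IntegrableOn (fun x => g ‖x - C‖) (ball y r \ closedBall C R₁) μ := by
  refine Measure.integrableOn_of_bounded (M := max |g (r + dist y C)| |g R₁|)
    (measure_ne_top_of_subset sdiff_subset measure_ball_lt_top.ne)
    (hgm.comp (measurable_id.sub_const C).norm).aestronglyMeasurable ?_
  filter_upwards [ae_restrict_mem (measurableSet_ball.diff measurableSet_closedBall)]
    with x ⟨hxB, hxK⟩
  have hlo : R₁ < ‖x - C‖ := by simpa [dist_eq_norm] using hxK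
  have hhi : ‖x - C‖ < r + dist y C := by
    rw [← dist_eq_norm]; exact (dist_triangle x y C).trans_lt (by gcongr; exact hxB)
  exact abs_le_max_abs_abs (hg (by simp; linarith) (by simp; linarith) hhi.le)
    (hg self_mem_Ici (by simp; linarith) hlo.le)

theorem setIntegral_ball_sdiff_closedBall_lt (hgm : Measurable g) (hg : StrictAntiOn g (Ici R₁))
    (hR₂ : 0 < R₂) (hR : R₁ < R₂) (hsub : closedBall C R₁ ⊆ ball C' R₂) (hne : C' ≠ C) :
    ∫ x in ball C' R₂ \ closedBall C R₁, g ‖x - C‖ ∂μ <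
      ∫ x in ball C R₂ \ closedBall C R₁, g ‖x - C‖ ∂μ := by
  have hK : closedBall C R₁ ⊆ ball C R₂ := closedBall_subset_ball hR
  have hKfin : μ (closedBall C R₁) ≠ ⊤ := measure_closedBall_lt_top.ne
  refine setIntegral_lt_of_measure_eq (c := g R₂)
    (measurableSet_ball.diff measurableSet_closedBall)
    (measurableSet_ball.diff measurableSet_closedBall) ?_
    (measure_ne_top_of_subset sdiff_subset measure_ball_lt_top.ne)
    (integrableOn_ball_sdiff_closedBall_of_antitoneOn μ hgm hg.antitoneOn C R₂)
    (integrableOn_ball_sdiff_closedBall_of_antitoneOn μ hgm hg.antitoneOn C' R₂) ?_ ?_ ?_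
  · rw [measure_sdiff hK measurableSet_closedBall.nullMeasurableSet hKfin,
      measure_sdiff hsub measurableSet_closedBall.nullMeasurableSet hKfin,
      Measure.addHaar_ball_center μ C, Measure.addHaar_ball_center μ C']
  · rintro x ⟨⟨-, hxK⟩, hx⟩
    have hxB : R₂ ≤ ‖x - C‖ := by simpa [dist_eq_norm, hxK] using hx
    exact hg.antitoneOn (mem_Ici.2 hR.le) (mem_Ici.2 (hR.le.trans hxB)) hxB
  · rintro x ⟨⟨hxB, hxK⟩, -⟩
    have hlo : R₁ < ‖x - C‖ := by simpa [dist_eq_norm] using hxK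
    have hhi : ‖x - C‖ < R₂ := by simpa [dist_eq_norm] using hxB
    exact hg (mem_Ici.2 hlo.le) (mem_Ici.2 hR.le) hhi
  · refine ((isOpen_ball.sdiff isClosed_closedBall).measure_pos μ
      (nonempty_ball_sdiff_closedBall_of_ne hne hR₂)).trans_le (measure_mono ?_)
    rintro x ⟨hxB, hxcl⟩
    have hxB' : x ∉ ball C' R₂ := fun h => hxcl (ball_subset_closedBall h)
    exact ⟨⟨hxB, fun h => hxB' (hsub h)⟩, fun h => hxB' h.1⟩

end Balls

theorem strictAntiOn_zpow_Ioi_of_neg {n : ℤ} (hn : n < 0) :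
    StrictAntiOn (fun x : ℝ => x ^ n) (Ioi 0) := by
  simpa only [← Real.rpow_intCast] using
    Real.strictAntiOn_rpow_Ioi_of_exponent_neg (Int.cast_lt_zero.2 hn)

/-- **Dirichlet-energy comparison in Euclidean space.**
If the closed ball of radius `R₁` about `C` is contained in the open ball of radius `R₂`
about `C'`, then the integral of `‖x − C‖^{2(1−m)}` over `ball C' R₂ \ closedBall C R₁` is at
most its integral over `ball C R₂ \ closedBall C R₁`, with equality iff `C' = C`. -/
theorem stmt8 (m : ℕ) (hm : 2 ≤ m) (R₁ R₂ : ℝ) (hR₁ : 0 < R₁) (hR : R₁ < R₂)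
    (C C' : EuclideanSpace ℝ (Fin m)) (hsub : closedBall C R₁ ⊆ ball C' R₂) :
    (∫ x in ball C' R₂ \ closedBall C R₁, ‖x - C‖ ^ (2 * (1 - (m : ℤ)))) ≤
        (∫ x in ball C R₂ \ closedBall C R₁, ‖x - C‖ ^ (2 * (1 - (m : ℤ)))) ∧
      ((∫ x in ball C' R₂ \ closedBall C R₁, ‖x - C‖ ^ (2 * (1 - (m : ℤ)))) =
          (∫ x in ball C R₂ \ closedBall C R₁, ‖x - C‖ ^ (2 * (1 - (m : ℤ)))) ↔ C' = C) := by
  by_cases hC : C' = C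
  · subst hC
    exact ⟨le_rfl, iff_of_true rfl rfl⟩
  have hexp : 2 * (1 - (m : ℤ)) < 0 := by omega
  have hlt := setIntegral_ball_sdiff_closedBall_lt volume (by fun_prop)
    ((strictAntiOn_zpow_Ioi_of_neg hexp).mono (Ici_subset_Ioi.2 hR₁)) (hR₁.trans hR) hR hsub hC
  exact ⟨hlt.le, iff_of_false hlt.ne hC⟩
end

section
/- Let m ≥ 1, let f : ℝ → ℝ be measurable, nonnegative, and nonincreasing on [0,∞), let R > 0, and let C, C' ∈ EuclideanSpace ℝ m. Then, with respect to the Lebesgue measure, ∫_{x ∈ ball(C',R)} f(‖x − C‖) dx ≤ ∫_{x ∈ ball(C,R)} f(‖x − C‖) dx. -/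
/-!
On `ball C R ∩ ball C' R` the two integrals agree. Outside it, the integrand is at most `f R`
on `ball C' R \ ball C R` and at least `f R` on `ball C R \ ball C' R`, and these two
difference sets have the same volume because the two balls do.
-/

open MeasureTheory Metric Set
open scoped ENNReal

namespace MeasureTheory

variable {α : Type*} [MeasurableSpace α] {μ : Measure α}

theorem setIntegral_le_setIntegral_of_le_const_le {s t : Set α} {g : α → ℝ} (c : ℝ)
    (hs : MeasurableSet s) (ht : MeasurableSet t) (hμ : μ s = μ t) (hμt : μ t ≠ ∞)
    (hgs : IntegrableOn g s μ) (hgt : IntegrableOn g t μ)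
    (hle : ∀ x ∈ s \ t, g x ≤ c) (hge : ∀ x ∈ t \ s, c ≤ g x) :
    ∫ x in s, g x ∂μ ≤ ∫ x in t, g x ∂μ := by
  have hμsdiff : μ (s \ t) = μ (t \ s) :=
    measure_sdiff_symm hs.nullMeasurableSet ht.nullMeasurableSet hμ
      (measure_ne_top_of_subset inter_subset_right hμt)
  have hμs : μ (s \ t) ≠ ∞ := measure_ne_top_of_subset sdiff_subset (hμ ▸ hμt)
  calc ∫ x in s, g x ∂μ = ∫ x in s ∩ t, g x ∂μ + ∫ x in s \ t, g x ∂μ :=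
        (integral_inter_add_sdiff ht hgs).symm
    _ ≤ ∫ x in s ∩ t, g x ∂μ + ∫ _ in s \ t, c ∂μ := by
        refine add_le_add le_rfl ?_
        exact setIntegral_mono_on (hgs.mono_set sdiff_subset) (integrableOn_const hμs)
          (hs.diff ht) hle
    _ = ∫ x in t ∩ s, g x ∂μ + ∫ _ in t \ s, c ∂μ := by
        rw [inter_comm, setIntegral_const, setIntegral_const, measureReal_def,
          measureReal_def, hμsdiff]
    _ ≤ ∫ x in t ∩ s, g x ∂μ + ∫ x in t \ s, g x ∂μ := by
        refine add_le_add le_rfl ?_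
        exact setIntegral_mono_on (integrableOn_const (measure_ne_top_of_subset sdiff_subset hμt))
          (hgt.mono_set sdiff_subset) (ht.diff hs) hge
    _ = ∫ x in t, g x ∂μ := integral_inter_add_sdiff hs hgt

end MeasureTheory

theorem integrableOn_comp_norm_sub_of_antitoneOn {E : Type*} [NormedAddCommGroup E]
    [MeasurableSpace E] [BorelSpace E] {μ : Measure E} {f : ℝ → ℝ} (hmeas : Measurable f)
    (hnonneg : ∀ r ∈ Ici (0 : ℝ), 0 ≤ f r) (hanti : AntitoneOn f (Ici (0 : ℝ))) (C : E)
    {s : Set E} (hs : μ s < ∞) :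
    IntegrableOn (fun x ↦ f ‖x - C‖) s μ := by
  refine IntegrableOn.of_bound hs
    (hmeas.comp (measurable_id.sub_const C).norm).aestronglyMeasurable (f 0)
    (Filter.Eventually.of_forall fun x ↦ ?_)
  rw [Real.norm_of_nonneg (hnonneg _ (norm_nonneg _))]
  exact hanti self_mem_Ici (norm_nonneg _) (norm_nonneg _)

theorem stmt9_general (m : ℕ) (f : ℝ → ℝ) (hmeas : Measurable f)
    (hnonneg : ∀ r ∈ Ici (0 : ℝ), 0 ≤ f r) (hanti : AntitoneOn f (Ici (0 : ℝ)))
    (R : ℝ) (C C' : EuclideanSpace ℝ (Fin m)) :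
    (∫ x in ball C' R, f ‖x - C‖) ≤ ∫ x in ball C R, f ‖x - C‖ := by
  have hvol : volume (ball C' R) = volume (ball C R) := by
    rw [Measure.addHaar_ball_center volume C', Measure.addHaar_ball_center volume C]
  have hint (c : EuclideanSpace ℝ (Fin m)) : IntegrableOn (fun x ↦ f ‖x - C‖) (ball c R) :=
    integrableOn_comp_norm_sub_of_antitoneOn hmeas hnonneg hanti C measure_ball_lt_top
  refine setIntegral_le_setIntegral_of_le_const_le (f R) measurableSet_ball measurableSet_ball
    hvol measure_ball_lt_top.ne (hint C') (hint C) ?_ ?_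
  · rintro x ⟨hx', hx⟩
    have hR : R ≤ ‖x - C‖ := not_lt.mp (mt mem_ball_iff_norm.mpr hx)
    exact hanti (pos_of_mem_ball hx').le ((pos_of_mem_ball hx').le.trans hR) hR
  · rintro x ⟨hx, -⟩
    exact hanti (norm_nonneg _) (pos_of_mem_ball hx).le (mem_ball_iff_norm.mp hx).le

/-- **Rearrangement-type inequality for radial nonincreasing integrands.**
If `f` is measurable, nonnegative and nonincreasing on `[0, ∞)`, then among all balls of
radius `R`, the integral of `x ↦ f(‖x − C‖)` is largest over the ball centered at `C`. -/
theorem stmt9 (m : ℕ) (hm : 1 ≤ m) (f : ℝ → ℝ) (hmeas : Measurable f)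
    (hnonneg : ∀ r ∈ Ici (0 : ℝ), 0 ≤ f r) (hanti : AntitoneOn f (Ici (0 : ℝ)))
    (R : ℝ) (hR : 0 < R) (C C' : EuclideanSpace ℝ (Fin m)) :
    (∫ x in ball C' R, f ‖x - C‖) ≤ ∫ x in ball C R, f ‖x - C‖ :=
  stmt9_general m f hmeas hnonneg hanti R C C'
end

section
/- Let m and k be natural numbers with m > k ≥ 2, and let s, R₂ be real numbers with 0 < s < R₂ < π/4. Then (sin(R₂ − s))^{m−1} · (cos(R₂ − s))^{k−1} < (sin(R₂ + s))^{m−1} · (cos(R₂ + s))^{k−1}. -/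
open Real

/-- **Density comparison for CROSSs other than the sphere.**
For `m > k ≥ 2` and `0 < s < R₂ < π/4`,
`ω(R₂ − s) < ω(R₂ + s)` where `ω(t) = (sin t)^{m−1}(cos t)^{k−1}`. -/
theorem stmt10 (m k : ℕ) (hk : 2 ≤ k) (hmk : k < m) (s R₂ : ℝ)
    (hs : 0 < s) (hsR : s < R₂) (hR : R₂ < π / 4) :
    Real.sin (R₂ - s) ^ (m - 1) * Real.cos (R₂ - s) ^ (k - 1) <
      Real.sin (R₂ + s) ^ (m - 1) * Real.cos (R₂ + s) ^ (k - 1) := by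
  have hpi : (0:ℝ) < π := Real.pi_pos
  set a := R₂ - s with ha
  set b := R₂ + s with hb
  have ha0 : 0 < a := by simp [ha]; linarith
  have hab : a < b := by simp [ha, hb]; linarith
  have hb2 : b < π / 2 := by simp [hb]; linarith
  have hsa : 0 < Real.sin a := Real.sin_pos_of_pos_of_lt_pi ha0 (by linarith)
  have hsb : 0 < Real.sin b := Real.sin_pos_of_pos_of_lt_pi (by linarith) (by linarith)
  have hca : 0 < Real.cos a := Real.cos_pos_of_mem_Ioo ⟨by linarith, by linarith⟩
  have hcb : 0 < Real.cos b := Real.cos_pos_of_mem_Ioo ⟨by linarith, by linarith⟩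
  -- sin is strictly increasing on [-(π/2), π/2]
  have h1 : Real.sin a < Real.sin b := by
    apply Real.strictMonoOn_sin ⟨by linarith, by linarith⟩ ⟨by linarith, by linarith⟩ hab
  -- sin a * cos a < sin b * cos b
  have key : Real.sin b * Real.cos b - Real.sin a * Real.cos a
      = 2 * Real.sin s * Real.cos s * (Real.cos R₂ ^ 2 - Real.sin R₂ ^ 2) := by
    rw [ha, hb, Real.sin_add, Real.cos_add, Real.sin_sub, Real.cos_sub]
    ring
  have hcos2 : 0 < Real.cos R₂ ^ 2 - Real.sin R₂ ^ 2 := by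
    have : Real.cos R₂ ^ 2 - Real.sin R₂ ^ 2 = Real.cos (2 * R₂) := by
      rw [Real.cos_two_mul']
    rw [this]
    exact Real.cos_pos_of_mem_Ioo ⟨by linarith, by linarith⟩
  have hss : 0 < Real.sin s := Real.sin_pos_of_pos_of_lt_pi hs (by linarith)
  have hcs : 0 < Real.cos s := Real.cos_pos_of_mem_Ioo ⟨by linarith, by linarith⟩
  have h2 : Real.sin a * Real.cos a < Real.sin b * Real.cos b := by
    have hpos : 0 < 2 * Real.sin s * Real.cos s * (Real.cos R₂ ^ 2 - Real.sin R₂ ^ 2) := by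
      positivity
    linarith
  -- rewrite exponents: m - 1 = (k - 1) + (m - k)
  have hm1 : m - 1 = (k - 1) + (m - k) := by omega
  have hk1 : k - 1 ≠ 0 := by omega
  have hmk1 : m - k ≠ 0 := by omega
  have expand : ∀ x y : ℝ, x ^ (m - 1) * y ^ (k - 1)
      = (x * y) ^ (k - 1) * x ^ (m - k) := by
    intro x y
    rw [hm1, pow_add, mul_pow]
    ring
  rw [expand, expand]
  apply mul_lt_mul
  · exact pow_lt_pow_left₀ h2 (by positivity) hk1
  · exact le_of_lt (pow_lt_pow_left₀ h1 hsa.le hmk1)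
  · positivity
  · positivity
end

section
/- Let m ≥ 2, let c, X, P, Q ∈ EuclideanSpace ℝ m and R > 0 satisfy ‖P − c‖ = R, ‖Q − c‖ = R, ‖X − c‖ < R, and X ∈ segment ℝ P Q (X lies on the line segment joining P and Q). If the inner product ⟪P − X, c − X⟫ ≥ 0, then ‖Q − X‖ ≤ ‖P − X‖, and moreover ‖Q − X‖ = ‖P − X‖ if and only if ⟪P − X, c − X⟫ = 0. -/
/-!
Write `P - X = b • (P - Q)` and `Q - X = -(a • (P - Q))` with `a + b = 1`. Expanding
`‖P - c‖² = ‖Q - c‖²` around `X` gives `(b - a) ‖P - Q‖² = 2 ⟪P - Q, c - X⟫`, i.e.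
`‖P - X‖ (‖P - X‖ - ‖Q - X‖) = 2 ⟪P - X, c - X⟫`. Since `X` is interior, `X ≠ P`, so the
sign of `‖P - X‖ - ‖Q - X‖` is the sign of `⟪P - X, c - X⟫`.
-/

theorem norm_mul_sub_norm_eq_two_inner_of_mem_segment {E : Type*} [NormedAddCommGroup E]
    [InnerProductSpace ℝ E] {c X P Q : E} (hPQ : ‖P - c‖ = ‖Q - c‖) (hX : X ∈ segment ℝ P Q) :
    ‖P - X‖ * (‖P - X‖ - ‖Q - X‖) = 2 * inner ℝ (P - X) (c - X) := by
  obtain ⟨a, b, ha, hb, hab, rfl⟩ := hX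
  obtain rfl : a = 1 - b := eq_sub_of_add_eq hab
  set w := c - ((1 - b) • P + b • Q)
  have hPX : P - ((1 - b) • P + b • Q) = b • (P - Q) := by module
  have hQX : Q - ((1 - b) • P + b • Q) = -((1 - b) • (P - Q)) := by module
  have hPc : P - c = b • (P - Q) - w := by simp only [w]; module
  have hQc : Q - c = -((1 - b) • (P - Q)) - w := by simp only [w]; module
  have hsq := congrArg (· ^ 2) hPQ
  simp only [hPc, hQc, norm_sub_sq_real, norm_neg, norm_smul, inner_neg_left,
    real_inner_smul_left, Real.norm_of_nonneg hb, Real.norm_of_nonneg ha] at hsq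
  rw [hPX, hQX, norm_neg, norm_smul, norm_smul, real_inner_smul_left,
    Real.norm_of_nonneg hb, Real.norm_of_nonneg ha]
  linear_combination b * hsq

theorem stmt14_general (m : ℕ) (c X P Q : EuclideanSpace ℝ (Fin m)) (R : ℝ)
    (hP : ‖P - c‖ = R) (hQ : ‖Q - c‖ = R) (hX : ‖X - c‖ < R)
    (hseg : X ∈ segment ℝ P Q)
    (hangle : 0 ≤ (inner ℝ (P - X) (c - X) : ℝ)) :
    ‖Q - X‖ ≤ ‖P - X‖ ∧ (‖Q - X‖ = ‖P - X‖ ↔ (inner ℝ (P - X) (c - X) : ℝ) = 0) := by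
  have hPX : 0 < ‖P - X‖ := by
    refine norm_pos_iff.2 (sub_ne_zero.2 ?_)
    rintro rfl
    exact hX.ne hP
  have key := norm_mul_sub_norm_eq_two_inner_of_mem_segment (hP.trans hQ.symm) hseg
  refine ⟨?_, ?_⟩
  · have : 0 ≤ ‖P - X‖ * (‖P - X‖ - ‖Q - X‖) := by rw [key]; positivity
    exact sub_nonneg.1 (nonneg_of_mul_nonneg_right this hPX)
  · rw [eq_comm, ← sub_eq_zero, ← mul_right_inj' hPX.ne', mul_zero, key, mul_eq_zero,
      or_iff_right two_ne_zero]

/-- **Chord comparison in a Euclidean ball.**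
Let `P, Q` be points of the sphere of radius `R` about `c` and let `X` be an interior point
lying on the segment `[P, Q]`. If the angle at `X` between the direction toward `P` and the
direction toward `c` is at most `π/2` (i.e. `⟪P − X, c − X⟫ ≥ 0`), then `‖Q − X‖ ≤ ‖P − X‖`,
with equality iff `⟪P − X, c − X⟫ = 0`. -/
theorem stmt14 (m : ℕ) (hm : 2 ≤ m) (c X P Q : EuclideanSpace ℝ (Fin m)) (R : ℝ)
    (hP : ‖P - c‖ = R) (hQ : ‖Q - c‖ = R) (hX : ‖X - c‖ < R)
    (hseg : X ∈ segment ℝ P Q)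
    (hangle : 0 ≤ (inner ℝ (P - X) (c - X) : ℝ)) :
    ‖Q - X‖ ≤ ‖P - X‖ ∧ (‖Q - X‖ = ‖P - X‖ ↔ (inner ℝ (P - X) (c - X) : ℝ) = 0) :=
  stmt14_general m c X P Q R hP hQ hX hseg hangle
end
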